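/- Let M and N be left A-modules with flat connections ∇_M and ∇_N with respect to the universal differential calculus, and equip each with its induced right operation (x·a := a x − Σ x_A a x_M). Let c̃: M⊗N → N⊗M be c̃(m⊗n) = n⊗m − Σ m_A n ⊗ m_M. Then c̃ is right A-linear up to balanced relations: for all a ∈ A, m ∈ M, n ∈ N, the element obtained by applying the induced right action of a to the second (M-) tensor factor of c̃(m⊗n), minus c̃(m⊗(n·a)), lies in the K-linear span of {(y b)⊗x − y⊗(b x) : y ∈ N, b ∈ A, x ∈ M} inside N⊗M (where y b is the induced right action on N and b x the left action on M). -/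

import Mathlib

open TensorProduct

variable (K A M : Type*) [Field K] [Ring A] [Algebra K A]
  [AddCommGroup M] [Module K M] [Module A M] [IsScalarTower K A M]

/-- The action map `A ⊗ M → M`, `a ⊗ m ↦ a • m`. -/
noncomputable def actMap : A ⊗[K] M →ₗ[K] M :=
  TensorProduct.lift (LinearMap.mk₂ K (fun a m => a • m)
    (fun a b m => add_smul a b m)
    (fun k a m => smul_assoc k a m)
    (fun a m n => smul_add a m n)
    (fun k a m => (smul_comm k a m).symm))

/-- Left multiplication by `a : A` on a left `A`-module, as a `K`-linear map. -/
def lsmulMap (a : A) : M →ₗ[K] M where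
  toFun := fun m => a • m
  map_add' := fun x y => smul_add a x y
  map_smul' := fun k m => (smul_comm k a m).symm

/-- `a ↦ a • n` as a `K`-linear map `A → M`. -/
def smulBy (n : M) : A →ₗ[K] M where
  toFun := fun a => a • n
  map_add' := fun a b => add_smul a b n
  map_smul' := fun k a => smul_assoc k a n

/-- `D : M → A ⊗ M` is a connection with respect to the universal differential
calculus. -/
def IsConnection (D : M →ₗ[K] A ⊗[K] M) : Prop :=
  (∀ m : M, actMap K A M (D m) = 0) ∧
  ∀ (a : A) (m : M),
    D (a • m) = LinearMap.rTensor M (LinearMap.mulLeft K a) (D m)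
      + (1 : A) ⊗ₜ[K] (a • m) - a ⊗ₜ[K] m

/-- Flatness of a connection: `Σ 1 ⊗ m_A ⊗ m_M = Σ m_A ⊗ D(m_M)`. -/
def IsFlatConnection (D : M →ₗ[K] A ⊗[K] M) : Prop :=
  ∀ m : M, (1 : A) ⊗ₜ[K] (D m) = LinearMap.lTensor A D (D m)

/-- The induced right operation `m·a := a m − Σ m_A a m_M`. -/
noncomputable def rop (D : M →ₗ[K] A ⊗[K] M) (m : M) (a : A) : M :=
  a • m - actMap K A M (LinearMap.rTensor M (LinearMap.mulRight K a) (D m))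

variable (N : Type*) [AddCommGroup N] [Module K N] [Module A N] [IsScalarTower K A N]

/-- The map `N ⊗ A → N`, `n ⊗ a ↦ a • n`. -/
noncomputable def ract : N ⊗[K] A →ₗ[K] N :=
  TensorProduct.lift (LinearMap.mk₂ K (fun n a => a • n)
    (fun n₁ n₂ a => smul_add a n₁ n₂)
    (fun k n a => (smul_comm k a n).symm)
    (fun n a b => add_smul a b n)
    (fun k n a => smul_assoc k a n))

/-- The map `c̃ : M ⊗ N → N ⊗ M`, `m ⊗ n ↦ n ⊗ m − Σ (m_A • n) ⊗ m_M`, associated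
with a connection `D` on `M`. -/
noncomputable def ctMap (D : M →ₗ[K] A ⊗[K] M) : M ⊗[K] N →ₗ[K] N ⊗[K] M :=
  (LinearMap.id - (LinearMap.rTensor M (ract K A N)).comp
      (((TensorProduct.assoc K N A M).symm.toLinearMap).comp
        (LinearMap.lTensor N D))).comp
    (TensorProduct.comm K M N).toLinearMap

/-- The induced right operation by `a`, `m ↦ m·a = a m − Σ m_A a m_M`, as a `K`-linear
map `M → M`. -/
noncomputable def ropMap (D : M →ₗ[K] A ⊗[K] M) (a : A) : M →ₗ[K] M :=
  lsmulMap K A M a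
    - (actMap K A M).comp ((LinearMap.rTensor M (LinearMap.mulRight K a)).comp D)

/-! Applying `id ⊗ (·a)` to `c̃(m ⊗ n) = n ⊗ m − Σ m_A n ⊗ m_M` gives
`n ⊗ a m − Σ n ⊗ m_A a m_M − Σ m_A n ⊗ a m_M + Σ m_A n ⊗ (m_M)_A a (m_M)_M`, and flatness of the
connection on `M` cancels the second term against the fourth. Subtracting
`c̃(m ⊗ n·a) = n·a ⊗ m − Σ m_A (n·a) ⊗ m_M` leaves `n ⊗ a m − n·a ⊗ m` plus the terms
`m_A (n·a) ⊗ m_M − m_A n ⊗ a m_M`. The Leibniz rule for the connection on `N` makes its induced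
right operation commute with the left action, `m_A (n·a) = (m_A n)·a`, so every term is a
balanced relation. -/

section RightLinearUpToBalanced

variable {K A M N : Type*} [Field K] [Ring A] [Algebra K A] [AddCommGroup M] [Module K M]
  [AddCommGroup N] [Module K N] [Module A N] [IsScalarTower K A N]

@[simp]
lemma smulBy_apply (n : N) (a : A) : smulBy K A N n a = a • n := rfl

lemma ctMap_tmul (D : M →ₗ[K] A ⊗[K] M) (m : M) (n : N) :
    ctMap K A M N D (m ⊗ₜ[K] n) = n ⊗ₜ[K] m - LinearMap.rTensor M (smulBy K A N n) (D m) := by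
  have hcorr : ∀ u : A ⊗[K] M,
      LinearMap.rTensor M (ract K A N) ((TensorProduct.assoc K N A M).symm (n ⊗ₜ[K] u))
        = LinearMap.rTensor M (smulBy K A N n) u := by
    intro u
    induction u using TensorProduct.induction_on with
    | zero => simp
    | tmul b x => rfl
    | add x y hx hy => simp [tmul_add, hx, hy]
  simp [ctMap, hcorr]

lemma lTensor_comp_rTensor_smulBy_of_isFlat {D : M →ₗ[K] A ⊗[K] M}
    (hflat : IsFlatConnection K A M D) (g : A ⊗[K] M →ₗ[K] M) (n : N) (m : M) :
    LinearMap.lTensor N (g ∘ₗ D) (LinearMap.rTensor M (smulBy K A N n) (D m))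
      = n ⊗ₜ[K] g (D m) := by
  have hmap : ∀ u : A ⊗[K] M,
      LinearMap.lTensor N (g ∘ₗ D) (LinearMap.rTensor M (smulBy K A N n) u)
        = TensorProduct.map (smulBy K A N n) g (LinearMap.lTensor A D u) := by
    intro u
    induction u using TensorProduct.induction_on with
    | zero => simp
    | tmul b x => simp
    | add x y hx hy => simp [hx, hy]
  rw [hmap, ← hflat m, TensorProduct.map_tmul, smulBy_apply, one_smul]

variable [Module A M]

def balancedSpan (D : N →ₗ[K] A ⊗[K] N) : Submodule K (N ⊗[K] M) :=
  Submodule.span K {z | ∃ (y : N) (b : A) (x : M), z = rop K A N D y b ⊗ₜ[K] x - y ⊗ₜ[K] (b • x)}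

lemma rop_tmul_sub_tmul_smul_mem_balancedSpan (D : N →ₗ[K] A ⊗[K] N) (y : N) (b : A) (x : M) :
    rop K A N D y b ⊗ₜ[K] x - y ⊗ₜ[K] (b • x) ∈ balancedSpan (M := M) D :=
  Submodule.subset_span ⟨y, b, x, rfl⟩

variable [IsScalarTower K A M]

@[simp]
lemma actMap_tmul (a : A) (x : M) : actMap K A M (a ⊗ₜ[K] x) = a • x := rfl

@[simp]
lemma lsmulMap_apply (a : A) (x : M) : lsmulMap K A M a x = a • x := rfl

lemma smul_actMap (a : A) (w : A ⊗[K] M) :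
    a • actMap K A M w = actMap K A M (LinearMap.rTensor M (LinearMap.mulLeft K a) w) := by
  induction w using TensorProduct.induction_on with
  | zero => simp
  | tmul b x => simp [mul_smul]
  | add x y hx hy => simp [smul_add, hx, hy]

lemma rop_smul_left {D : M →ₗ[K] A ⊗[K] M} (hD : IsConnection K A M D) (a b : A) (m : M) :
    rop K A M D (b • m) a = b • rop K A M D m a := by
  have hcomm : ∀ u : A ⊗[K] M,
      LinearMap.rTensor M (LinearMap.mulRight K a) (LinearMap.rTensor M (LinearMap.mulLeft K b) u)
        = LinearMap.rTensor M (LinearMap.mulLeft K b)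
            (LinearMap.rTensor M (LinearMap.mulRight K a) u) := by
    intro u
    rw [← LinearMap.rTensor_comp_apply, ← LinearMap.rTensor_comp_apply]
    congr 2
    ext x
    simp [mul_assoc]
  unfold rop
  rw [hD.2 b m]
  simp only [map_sub, map_add, LinearMap.rTensor_tmul, LinearMap.mulRight_apply, one_mul,
    actMap_tmul]
  rw [hcomm, ← smul_actMap, smul_sub, mul_smul]
  abel

lemma lTensor_ropMap_ctMap_tmul {D : M →ₗ[K] A ⊗[K] M} (hflat : IsFlatConnection K A M D)
    (a : A) (m : M) (n : N) :
    LinearMap.lTensor N (ropMap K A M D a) (ctMap K A M N D (m ⊗ₜ[K] n))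
      = n ⊗ₜ[K] (a • m)
        - LinearMap.lTensor N (lsmulMap K A M a) (LinearMap.rTensor M (smulBy K A N n) (D m)) := by
  have hflat' := lTensor_comp_rTensor_smulBy_of_isFlat hflat
    (actMap K A M ∘ₗ LinearMap.rTensor M (LinearMap.mulRight K a)) n m
  rw [ctMap_tmul, map_sub, LinearMap.lTensor_tmul, ropMap, LinearMap.lTensor_sub,
    LinearMap.sub_apply, LinearMap.sub_apply, ← LinearMap.comp_assoc, hflat']
  simp only [lsmulMap_apply, LinearMap.comp_apply, tmul_sub]
  abel

lemma rTensor_smulBy_rop_sub_mem_balancedSpan {D : N →ₗ[K] A ⊗[K] N}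
    (hD : IsConnection K A N D) (a : A) (n : N) (u : A ⊗[K] M) :
    LinearMap.rTensor M (smulBy K A N (rop K A N D n a)) u
        - LinearMap.lTensor N (lsmulMap K A M a) (LinearMap.rTensor M (smulBy K A N n) u)
      ∈ balancedSpan D := by
  let f : A ⊗[K] M →ₗ[K] N ⊗[K] M := LinearMap.rTensor M (smulBy K A N (rop K A N D n a))
    - LinearMap.lTensor N (lsmulMap K A M a) ∘ₗ LinearMap.rTensor M (smulBy K A N n)
  change f u ∈ _
  induction u using TensorProduct.induction_on with
  | zero => simp
  | tmul b x =>
    simpa [f, ← rop_smul_left hD] using rop_tmul_sub_tmul_smul_mem_balancedSpan D (b • n) a x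
  | add x y hx hy => exact map_add f x y ▸ add_mem hx hy

end RightLinearUpToBalanced

theorem ctMap_right_linear_up_to_balanced
    (DM : M →ₗ[K] A ⊗[K] M)
    (hflatM : IsFlatConnection K A M DM)
    (DN : N →ₗ[K] A ⊗[K] N) (hconnN : IsConnection K A N DN)
    (a : A) (m : M) (n : N) :
    LinearMap.lTensor N (ropMap K A M DM a) (ctMap K A M N DM (m ⊗ₜ[K] n))
        - ctMap K A M N DM (m ⊗ₜ[K] (rop K A N DN n a))
      ∈ Submodule.span K
          {z : N ⊗[K] M | ∃ (y : N) (b : A) (x : M),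
            z = (rop K A N DN y b) ⊗ₜ[K] x - y ⊗ₜ[K] (b • x)} := by
  have hsplit :
      LinearMap.lTensor N (ropMap K A M DM a) (ctMap K A M N DM (m ⊗ₜ[K] n))
          - ctMap K A M N DM (m ⊗ₜ[K] (rop K A N DN n a))
        = -(rop K A N DN n a ⊗ₜ[K] m - n ⊗ₜ[K] (a • m))
          + (LinearMap.rTensor M (smulBy K A N (rop K A N DN n a)) (DM m)
            - LinearMap.lTensor N (lsmulMap K A M a)
                (LinearMap.rTensor M (smulBy K A N n) (DM m))) := by
    rw [lTensor_ropMap_ctMap_tmul hflatM, ctMap_tmul]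
    abel
  rw [hsplit]
  exact add_mem (neg_mem (rop_tmul_sub_tmul_smul_mem_balancedSpan DN n a m))
    (rTensor_smulBy_rop_sub_mem_balancedSpan hconnN a n (DM m))
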